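/- arXiv:1911.12403 — 9 statements merged into one kernel-verified Lean document; each statement's English description precedes it below -/
import Mathlib

section
/- For every integer t ≥ 2 such that t + 1 is prime, and every positive integer ℓ, there exists an ℓt × t Vatican design. -/
/-!
Label treatments and periods by the nonzero residues modulo the prime `p = t + 1`, and let row
`r` of a `t × t` square be multiplication by `r`. This is a Latin square, and if `x` and `y`
stand `d` periods apart in row `r` then `r * d = y - x` in `ZMod p`; so `(x, y, d)` determines
the row, and then the period: every ordered pair occurs at most once at each distance.
Stacking `ℓ` copies of the square multiplies all counts by `ℓ`.
-/

/-- A uniform `n × t` crossover design: each row is a bijection `Fin t → Fin t`,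
`t` divides `n`, and each treatment appears exactly `n / t` times in each column. -/
def IsUniformDesign (n t : ℕ) (D : Fin n → Fin t → Fin t) : Prop :=
  t ∣ n ∧ (∀ i : Fin n, Function.Bijective (D i)) ∧
  ∀ (j x : Fin t), Nat.card {i : Fin n // D i j = x} = n / t

/-- `o_d(x, y)`: the number of pairs `(i, j)` with `j + d < t`, `D i j = x` and
`D i (j + d) = y`. -/
noncomputable def designPairCount (n t : ℕ) (D : Fin n → Fin t → Fin t) (d : ℕ) (x y : Fin t) : ℕ :=
  Nat.card {p : Fin n × Fin t //
    ∃ h : (p.2 : ℕ) + d < t, D p.1 p.2 = x ∧ D p.1 ⟨(p.2 : ℕ) + d, h⟩ = y}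

/-- A Roman-`k` design: a uniform design with `o_d(x, y) ≤ n / t` for all
`1 ≤ d ≤ k` and all distinct treatments `x ≠ y`. -/
def IsRomanDesign (n t k : ℕ) (D : Fin n → Fin t → Fin t) : Prop :=
  IsUniformDesign n t D ∧
  ∀ d : ℕ, 1 ≤ d → d ≤ k → ∀ x y : Fin t, x ≠ y → designPairCount n t D d x y ≤ n / t

/-- A Vatican design is a Roman-`(t - 1)` design. -/
def IsVaticanDesign (n t : ℕ) (D : Fin n → Fin t → Fin t) : Prop :=
  IsRomanDesign n t (t - 1) D

section Stack

variable {n t : ℕ}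

def stackDesign (ℓ : ℕ) (D : Fin n → Fin t → Fin t) : Fin (ℓ * n) → Fin t → Fin t :=
  fun i => D i.modNat

theorem Fin.card_subtype_modNat (ℓ : ℕ) (P : Fin n → Prop) :
    Nat.card {i : Fin (ℓ * n) // P i.modNat} = ℓ * Nat.card {r // P r} := by
  have e : {i : Fin (ℓ * n) // P i.modNat} ≃ {r // P r} × Fin ℓ :=
    ((finProdFinEquiv.symm.trans (Equiv.prodComm _ _)).subtypeEquiv fun _ => Iff.rfl).trans
      Equiv.prodSubtypeFstEquivSubtypeProd
  rw [Nat.card_congr e, Nat.card_prod, Nat.card_fin, mul_comm]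

theorem Fin.card_subtype_prod_modNat {β : Type*} (ℓ : ℕ) (P : Fin n → β → Prop) :
    Nat.card {p : Fin (ℓ * n) × β // P p.1.modNat p.2} =
      ℓ * Nat.card {q : Fin n × β // P q.1 q.2} := by
  have e :
      {p : Fin (ℓ * n) × β // P p.1.modNat p.2} ≃ {q : Fin n × β // P q.1 q.2} × Fin ℓ :=
    ((((finProdFinEquiv.symm.prodCongr (Equiv.refl β)).trans (Equiv.prodAssoc _ _ _)).trans
      (Equiv.prodComm _ _)).subtypeEquiv fun _ => Iff.rfl).trans
      (Equiv.prodSubtypeFstEquivSubtypeProd (p := fun q : Fin n × β => P q.1 q.2))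
  rw [Nat.card_congr e, Nat.card_prod, Nat.card_fin, mul_comm]

theorem IsUniformDesign.stack {D : Fin n → Fin t → Fin t} (hD : IsUniformDesign n t D)
    (ℓ : ℕ) : IsUniformDesign (ℓ * n) t (stackDesign ℓ D) := by
  obtain ⟨hdvd, hrow, hcol⟩ := hD
  refine ⟨hdvd.mul_left ℓ, fun i => hrow i.modNat, fun j x => ?_⟩
  rw [Nat.mul_div_assoc ℓ hdvd, ← hcol j x]
  exact Fin.card_subtype_modNat ℓ (D · j = x)

theorem designPairCount_stackDesign (ℓ : ℕ) (D : Fin n → Fin t → Fin t) (d : ℕ)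
    (x y : Fin t) :
    designPairCount (ℓ * n) t (stackDesign ℓ D) d x y = ℓ * designPairCount n t D d x y :=
  Fin.card_subtype_prod_modNat ℓ fun (r : Fin n) (j : Fin t) =>
    ∃ h : (j : ℕ) + d < t, D r j = x ∧ D r ⟨j + d, h⟩ = y

theorem IsRomanDesign.stack {k : ℕ} {D : Fin n → Fin t → Fin t} (hD : IsRomanDesign n t k D)
    (ℓ : ℕ) : IsRomanDesign (ℓ * n) t k (stackDesign ℓ D) := by
  refine ⟨hD.1.stack ℓ, fun d hd1 hdk x y hxy => ?_⟩
  rw [designPairCount_stackDesign, Nat.mul_div_assoc ℓ hD.1.1]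
  exact Nat.mul_le_mul_left ℓ (hD.2 d hd1 hdk x y hxy)

end Stack

def cayleyDesign {t : ℕ} {G : Type*} [Group G] (e : Fin t ≃ G) : Fin t → Fin t → Fin t :=
  fun r j => e.symm (e r * e j)

theorem isUniformDesign_cayleyDesign {t : ℕ} {G : Type*} [Group G] (e : Fin t ≃ G) :
    IsUniformDesign t t (cayleyDesign e) := by
  refine ⟨dvd_rfl, fun r => ?_, fun j x => ?_⟩
  · exact e.symm.bijective.comp ((Group.mulLeft_bijective (e r)).comp e.bijective)
  · have hcol : Function.Bijective (cayleyDesign e · j) :=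
      e.symm.bijective.comp ((Group.mulRight_bijective (e j)).comp e.bijective)
    obtain ⟨r, hr⟩ := hcol.2 x
    rw [Nat.div_self x.pos, Nat.card_eq_one_iff_unique]
    exact ⟨⟨fun a b => Subtype.ext (hcol.1 (a.2.trans b.2.symm))⟩, ⟨⟨r, hr⟩⟩⟩

namespace ZMod

theorem natCast_ne_zero_of_pos_of_lt {a n : ℕ} (ha : 0 < a) (han : a < n) : (a : ZMod n) ≠ 0 :=
  (natCast_eq_zero_iff a n).not.mpr (Nat.not_dvd_of_pos_of_lt ha han)

noncomputable def finEquivUnits (t : ℕ) [Fact (t + 1).Prime] : Fin t ≃ (ZMod (t + 1))ˣ :=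
  Equiv.ofBijective
    (fun x => Units.mk0 ((x : ℕ) + 1 : ZMod (t + 1))
      (by exact_mod_cast natCast_ne_zero_of_pos_of_lt x.succ_pos (by omega)))
    ((Fintype.bijective_iff_injective_and_card _).mpr
      ⟨fun x y hxy => by
        have h : ((x : ℕ) : ZMod (t + 1)) = (y : ℕ) := add_right_cancel (congrArg Units.val hxy)
        rw [natCast_eq_natCast_iff', Nat.mod_eq_of_lt (by omega), Nat.mod_eq_of_lt (by omega)] at h
        exact Fin.ext h,
        by rw [card_units]; simp⟩)

variable {t : ℕ} [Fact (t + 1).Prime]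

@[simp]
theorem coe_finEquivUnits (x : Fin t) : (finEquivUnits t x : ZMod (t + 1)) = (x : ℕ) + 1 :=
  rfl

theorem finEquivUnits_mul_eq_sub {r j x y : Fin t} {d : ℕ} (h : (j : ℕ) + d < t)
    (hx : cayleyDesign (finEquivUnits t) r j = x)
    (hy : cayleyDesign (finEquivUnits t) r ⟨j + d, h⟩ = y) :
    (finEquivUnits t r : ZMod (t + 1)) * d = finEquivUnits t y - finEquivUnits t x := by
  rw [cayleyDesign, Equiv.symm_apply_eq] at hx hy
  have hx' := congrArg Units.val hx
  have hy' := congrArg Units.val hy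
  simp only [Units.val_mul, coe_finEquivUnits, Nat.cast_add] at hx' hy' ⊢
  linear_combination hy' - hx'

theorem designPairCount_cayleyDesign_finEquivUnits_le_one {d : ℕ} (hd : 0 < d) (x y : Fin t) :
    designPairCount t t (cayleyDesign (finEquivUnits t)) d x y ≤ 1 := by
  rw [designPairCount, Finite.card_le_one_iff_subsingleton]
  constructor
  rintro ⟨⟨r, j⟩, h, hx, hy⟩ ⟨⟨r', j'⟩, h', hx', hy'⟩
  have hd' : (d : ZMod (t + 1)) ≠ 0 := natCast_ne_zero_of_pos_of_lt hd (by omega)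
  obtain rfl : r = r' := (finEquivUnits t).injective <| Units.ext <| mul_right_cancel₀ hd' <|
    (finEquivUnits_mul_eq_sub h hx hy).trans (finEquivUnits_mul_eq_sub h' hx' hy').symm
  obtain rfl : j = j' := (finEquivUnits t).injective <| mul_left_cancel <|
    (finEquivUnits t).symm.injective (hx.trans hx'.symm)
  rfl

theorem isRomanDesign_cayleyDesign_finEquivUnits (k : ℕ) :
    IsRomanDesign t t k (cayleyDesign (finEquivUnits t)) :=
  ⟨isUniformDesign_cayleyDesign _, fun d hd _ x y _ => by
    rw [Nat.div_self x.pos]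
    exact designPairCount_cayleyDesign_finEquivUnits_le_one hd x y⟩

end ZMod

theorem vatican_design_of_prime_succ_general (t : ℕ) (hp : Nat.Prime (t + 1)) (ℓ : ℕ) :
    ∃ D : Fin (ℓ * t) → Fin t → Fin t, IsVaticanDesign (ℓ * t) t D :=
  have : Fact (t + 1).Prime := ⟨hp⟩
  ⟨stackDesign ℓ (cayleyDesign (ZMod.finEquivUnits t)),
    (ZMod.isRomanDesign_cayleyDesign_finEquivUnits (t - 1)).stack ℓ⟩

theorem vatican_design_of_prime_succ (t : ℕ) (ht : 2 ≤ t) (hp : Nat.Prime (t + 1))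
    (ℓ : ℕ) (hℓ : 0 < ℓ) :
    ∃ D : Fin (ℓ * t) → Fin t → Fin t, IsVaticanDesign (ℓ * t) t D :=
  vatican_design_of_prime_succ_general t hp ℓ
end

section
/- For t ∈ {3, 15} and every even positive integer ℓ, there exists an ℓt × t Vatican design. -/
/-!
Take the block of `2t` rows `j ↦ ±σ(j) + r` (`r ∈ ℤ/t`) for a permutation `σ` of `ℤ/t`, and
repeat it `ℓ/2` times. Each row is a permutation and each column of the block contains every
treatment twice. If `x` and `y` stand at distance `d` in row `(±, r)`, starting in period `j`,
then `y - x = ±(σ(j + d) - σ(j))`, and `(±, j)` determines `r`. So `o_d(x, y)` of the block is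
at most the number of signed differences `±(σ(j + d) - σ(j))` equal to `y - x`, and the Vatican
bound `2` for the block holds as soon as every nonzero signed difference occurs at most twice at
every distance. Explicit such `σ` exist for `t = 3` and `t = 15`.
-/

open Finset

theorem natCard_subtype_comp_snd {α β γ : Type*} (e : α ≃ γ × β) (P : β → Prop) :
    Nat.card {a // P (e a).2} = Nat.card γ * Nat.card {b // P b} := by
  rw [mul_comm, ← Nat.card_prod]
  exact Nat.card_congr (((e.trans (Equiv.prodComm γ β)).subtypeEquiv fun _ => Iff.rfl).trans
    Equiv.prodSubtypeFstEquivSubtypeProd)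

theorem isRomanDesign_replicate {n m t k c : ℕ} {R : Type*} (B : R → Fin t → Fin t)
    (e : Fin n ≃ Fin m × R) (ht : 0 < t) (hR : Nat.card R = c * t)
    (hrow : ∀ r, Function.Bijective (B r))
    (hcol : ∀ j x, Nat.card {r // B r j = x} = c)
    (hpair : ∀ d, 1 ≤ d → d ≤ k → ∀ x y, x ≠ y →
      Nat.card {p : R × Fin t //
        ∃ h : (p.2 : ℕ) + d < t, B p.1 p.2 = x ∧ B p.1 ⟨p.2 + d, h⟩ = y} ≤ c) :
    IsRomanDesign n t k (fun i => B (e i).2) := by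
  have hn : n = m * c * t := by
    rw [mul_assoc, ← hR, ← Nat.card_fin m, ← Nat.card_prod, ← Nat.card_congr e, Nat.card_fin]
  have hnt : n / t = m * c := by rw [hn, Nat.mul_div_cancel _ ht]
  refine ⟨⟨⟨m * c, by rw [hn, mul_comm]⟩, fun i => hrow _, fun j x => ?_⟩,
    fun d hd1 hdk x y hxy => ?_⟩
  · rw [hnt, natCard_subtype_comp_snd e (fun r => B r j = x), Nat.card_fin, hcol]
  · rw [hnt, designPairCount]
    refine (natCard_subtype_comp_snd ((e.prodCongr (Equiv.refl (Fin t))).trans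
      (Equiv.prodAssoc _ _ _)) (fun p : R × Fin t =>
        ∃ h : (p.2 : ℕ) + d < t, B p.1 p.2 = x ∧ B p.1 ⟨p.2 + d, h⟩ = y)).trans_le ?_
    rw [Nat.card_fin]
    exact Nat.mul_le_mul_left m (hpair d hd1 hdk x y hxy)

section SignedShift

variable {t : ℕ}

def signed (ε : Bool) (a : Fin t) : Fin t :=
  cond ε a (-a)

theorem signed_injective (ε : Bool) : Function.Injective (signed (t := t) ε) := by
  cases ε
  · exact neg_injective
  · exact Function.injective_id

def signedShiftBlock (σ : Fin t → Fin t) (q : Bool × Fin t) (j : Fin t) : Fin t :=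
  signed q.1 (σ j) + q.2

def signedDiffCount (σ : Fin t → Fin t) (d : ℕ) (δ : Fin t) : ℕ :=
  #{q : Bool × Fin t | ∃ h : (q.2 : ℕ) + d < t, signed q.1 (σ ⟨q.2 + d, h⟩ - σ q.2) = δ}

theorem signedShiftBlock_bijective {σ : Fin t → Fin t} (hσ : Function.Injective σ)
    (q : Bool × Fin t) : Function.Bijective (signedShiftBlock σ q) :=
  Finite.injective_iff_bijective.mp fun _ _ h =>
    hσ (signed_injective q.1 (add_right_cancel h))

variable [NeZero t]

theorem signed_sub (ε : Bool) (a b : Fin t) : signed ε (a - b) = signed ε a - signed ε b := by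
  cases ε <;> simp only [signed, cond, neg_sub, sub_neg_eq_add, neg_add_eq_sub]

theorem natCard_signedShiftBlock_eq (σ : Fin t → Fin t) (j x : Fin t) :
    Nat.card {q // signedShiftBlock σ q j = x} = 2 := by
  have e : {q // signedShiftBlock σ q j = x} ≃ Bool :=
    { toFun := fun q => q.1.1
      invFun := fun ε => ⟨(ε, x - signed ε (σ j)), add_sub_cancel _ _⟩
      left_inv := by
        rintro ⟨⟨ε, r⟩, rfl⟩
        simp only [signedShiftBlock, add_sub_cancel_left]
      right_inv := fun _ => rfl }
  rw [Nat.card_congr e, Nat.card_eq_fintype_card, Fintype.card_bool]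

theorem natCard_signedShiftBlock_pair_le (σ : Fin t → Fin t) (d : ℕ) (x y : Fin t) :
    Nat.card {p : (Bool × Fin t) × Fin t // ∃ h : (p.2 : ℕ) + d < t,
      signedShiftBlock σ p.1 p.2 = x ∧ signedShiftBlock σ p.1 ⟨p.2 + d, h⟩ = y}
      ≤ signedDiffCount σ d (y - x) := by
  rw [signedDiffCount, ← Fintype.card_subtype, ← Nat.card_eq_fintype_card]
  refine Nat.card_le_card_of_injective (fun p => ⟨(p.1.1.1, p.1.2), ?_⟩) ?_
  · obtain ⟨⟨⟨ε, r⟩, j⟩, h, rfl, rfl⟩ := p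
    exact ⟨h, by simp only [signedShiftBlock, signed_sub, add_sub_add_right_eq_sub]⟩
  · rintro ⟨⟨⟨ε, r⟩, j⟩, _, hx, _⟩ ⟨⟨⟨ε', r'⟩, j'⟩, _, hx', _⟩ hq
    simp only [Subtype.mk.injEq, Prod.mk.injEq] at hq
    obtain ⟨rfl, rfl⟩ := hq
    obtain rfl : r = r' := add_left_cancel (hx.trans hx'.symm)
    rfl

theorem exists_isVaticanDesign_of_signedDiffCount_le_two (σ : Fin t → Fin t)
    (hσ : Function.Injective σ)
    (hdiff : ∀ d < t, ∀ δ : Fin t, δ ≠ 0 → signedDiffCount σ d δ ≤ 2) (m : ℕ) :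
    ∃ D : Fin (m * (2 * t)) → Fin t → Fin t, IsVaticanDesign (m * (2 * t)) t D := by
  have ht : 0 < t := Nat.pos_of_ne_zero (NeZero.ne t)
  have e : Fin (m * (2 * t)) ≃ Fin m × (Bool × Fin t) := Fintype.equivOfCardEq (by simp)
  refine ⟨_, isRomanDesign_replicate (signedShiftBlock σ) e ht (by simp)
    (signedShiftBlock_bijective hσ) (natCard_signedShiftBlock_eq σ)
    fun d _ hd x y hxy => ?_⟩
  exact (natCard_signedShiftBlock_pair_le σ d x y).trans
    (hdiff d (by omega) _ (sub_ne_zero.mpr hxy.symm))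

end SignedShift

theorem vatican_design_three_fifteen_general (t : ℕ) (ht : t = 3 ∨ t = 15)
    (ℓ : ℕ) (hev : Even ℓ) :
    ∃ D : Fin (ℓ * t) → Fin t → Fin t, IsVaticanDesign (ℓ * t) t D := by
  obtain ⟨m, rfl⟩ := hev
  rw [show (m + m) * t = m * (2 * t) by ring]
  rcases ht with rfl | rfl
  · exact exists_isVaticanDesign_of_signedDiffCount_le_two ![0, 1, 2] (by decide) (by decide) m
  · exact exists_isVaticanDesign_of_signedDiffCount_le_two
      ![0, 1, 4, 10, 8, 2, 7, 12, 9, 13, 11, 3, 14, 6, 5] (by decide) (by decide) m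

theorem vatican_design_three_fifteen (t : ℕ) (ht : t = 3 ∨ t = 15)
    (ℓ : ℕ) (hℓ : 0 < ℓ) (hev : Even ℓ) :
    ∃ D : Fin (ℓ * t) → Fin t → Fin t, IsVaticanDesign (ℓ * t) t D :=
  vatican_design_three_fifteen_general t ht ℓ hev
end

section
/- For every prime number t and every positive integer ℓ that is a multiple of t − 1, there exists an ℓt × t Vatican design. -/
/-!
Identify the treatments and the periods with the elements of a field `F` of order `t`
(`ZMod t` for prime `t`) and take as rows, `m` times each, all affine bijections `z ↦ a z + b`
of `F`. Every column meets each treatment once per slope `a`, hence `m (t - 1)` times. An affine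
map is determined by its values at two distinct points, so the rows placing `x` in period `j`
and `y` in period `j + d` are the `m` copies of a single map; summing over the at most `t - 1`
admissible periods `j` gives `o_d(x, y) ≤ m (t - 1) = n / t`.
-/

theorem eq_and_eq_of_mul_add_eq_mul_add {R : Type*} [CommRing R] [NoZeroDivisors R]
    {a b a' b' u v : R} (huv : u ≠ v) (hu : a * u + b = a' * u + b')
    (hv : a * v + b = a' * v + b') : a = a' ∧ b = b' := by
  have hprod : (a - a') * (u - v) = 0 := by linear_combination hu - hv
  have ha : a = a' := sub_eq_zero.mp ((mul_eq_zero.mp hprod).resolve_right (sub_ne_zero.mpr huv))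
  subst ha
  exact ⟨rfl, add_left_cancel hu⟩

section AffineDesign

variable {F : Type*} [Field F] {ι : Type*}

def affineThroughEquiv (u w : F) : {r : ι × Fˣ × F // r.2.1 * u + r.2.2 = w} ≃ ι × Fˣ where
  toFun r := (r.1.1, r.1.2.1)
  invFun s := ⟨(s.1, s.2, w - s.2 * u), by ring⟩
  left_inv := by
    rintro ⟨⟨c, a, b⟩, h⟩
    simp only [Subtype.mk.injEq, Prod.mk.injEq, true_and]
    linear_combination (-1 : F) * h
  right_inv _ := rfl

variable {n t m : ℕ}

def affineDesign (ψ : Fin t ≃ F) (e : Fin n ≃ Fin m × Fˣ × F) : Fin n → Fin t → Fin t :=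
  fun i j => ψ.symm ((e i).2.1 * ψ j + (e i).2.2)

variable (ψ : Fin t ≃ F) (e : Fin n ≃ Fin m × Fˣ × F)

theorem affineDesign_eq_iff (i : Fin n) (j x : Fin t) :
    affineDesign ψ e i j = x ↔ (e i).2.1 * ψ j + (e i).2.2 = ψ x :=
  ψ.symm_apply_eq

theorem bijective_affineDesign (i : Fin n) : Function.Bijective (affineDesign ψ e i) :=
  (ψ.trans ((Units.mulLeft (e i).2.1).trans ((Equiv.addRight (e i).2.2).trans ψ.symm))).bijective

theorem card_affineDesign_eq [Fintype F] (j x : Fin t) :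
    Nat.card {i : Fin n // affineDesign ψ e i j = x} = m * Nat.card Fˣ := by
  rw [Nat.card_congr ((e.subtypeEquiv fun i => affineDesign_eq_iff ψ e i j x).trans
    (affineThroughEquiv (ψ j) (ψ x)))]
  simp

theorem designPairCount_affineDesign_le {d : ℕ} (hd : 0 < d) (x y : Fin t) :
    designPairCount n t (affineDesign ψ e) d x y ≤ m * (t - 1) := by
  refine (Nat.card_le_card_of_injective (β := Fin m × Fin (t - 1))
    (fun p => ((e p.1.1).1, ⟨p.1.2, by obtain ⟨h, -⟩ := p.2; omega⟩)) ?_).trans_eq (by simp)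
  rintro ⟨⟨i, j⟩, hj, hx, hy⟩ ⟨⟨i', j'⟩, hj', hx', hy'⟩ h
  simp only [Prod.mk.injEq, Fin.mk.injEq] at h
  obtain ⟨hcopy, hjj⟩ := h
  obtain rfl := Fin.ext hjj
  rw [affineDesign_eq_iff] at hx hy hx' hy'
  have hne : ψ j ≠ ψ ⟨j + d, hj⟩ :=
    ψ.injective.ne (Fin.ne_of_val_ne (Nat.lt_add_of_pos_right hd).ne)
  obtain ⟨ha, hb⟩ :=
    eq_and_eq_of_mul_add_eq_mul_add hne (hx.trans hx'.symm) (hy.trans hy'.symm)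
  obtain rfl : i = i' := e.injective (Prod.ext hcopy (Prod.ext (Units.ext ha) hb))
  rfl

theorem isVaticanDesign_affineDesign [Fintype F] (ht : Fintype.card F = t)
    (hn : n = m * (t - 1) * t) : IsVaticanDesign n t (affineDesign ψ e) := by
  classical
  have hcard : n / t = m * (t - 1) := by
    rw [hn, Nat.mul_div_cancel _ (ht ▸ Fintype.card_pos)]
  refine ⟨⟨⟨m * (t - 1), by rw [hn, mul_comm]⟩, bijective_affineDesign ψ e,
    fun j x => ?_⟩,
    fun d hd _ x y _ => hcard ▸ designPairCount_affineDesign_le ψ e hd x y⟩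
  rw [card_affineDesign_eq, Nat.card_eq_fintype_card, Fintype.card_units, ht, hcard]

theorem exists_isVaticanDesign_of_card_eq [Fintype F] (ht : Fintype.card F = t) (m : ℕ) :
    ∃ D : Fin (m * (t - 1) * t) → Fin t → Fin t, IsVaticanDesign (m * (t - 1) * t) t D := by
  classical
  have hrows : Fintype.card (Fin m × Fˣ × F) = m * (t - 1) * t := by
    simp [Fintype.card_units, ht, mul_assoc]
  exact ⟨_, isVaticanDesign_affineDesign (Fintype.equivFinOfCardEq ht).symm
    (Fintype.equivFinOfCardEq hrows).symm ht rfl⟩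

end AffineDesign

theorem vatican_design_of_prime_general (t : ℕ) (ht : Nat.Prime t)
    (ℓ : ℕ) (hdvd : (t - 1) ∣ ℓ) :
    ∃ D : Fin (ℓ * t) → Fin t → Fin t, IsVaticanDesign (ℓ * t) t D := by
  have : Fact t.Prime := ⟨ht⟩
  obtain ⟨m, rfl⟩ := hdvd
  rw [mul_comm (t - 1) m]
  exact exists_isVaticanDesign_of_card_eq (ZMod.card t) m

theorem vatican_design_of_prime (t : ℕ) (ht : Nat.Prime t)
    (ℓ : ℕ) (hℓ : 0 < ℓ) (hdvd : (t - 1) ∣ ℓ) :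
    ∃ D : Fin (ℓ * t) → Fin t → Fin t, IsVaticanDesign (ℓ * t) t D :=
  vatican_design_of_prime_general t ht ℓ hdvd
end

section
/- Let t, k be positive integers and ℓ₁, …, ℓ_m positive integers such that for each i ∈ {1, …, m} there exists an ℓ_i t × t Roman-k design. Then for any non-negative integers c₁, …, c_m with n = (c₁ℓ₁ + ⋯ + c_mℓ_m)t > 0, there exists an n × t Roman-k design. -/
/-! Stacking two Roman-`k` designs on top of each other gives a Roman-`k` design: every count in
the definition is additive over the rows, and so is `n / t` once `t` divides both row numbers.
Hence the row numbers of Roman-`k` designs form an additive submonoid of `ℕ`, which contains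
every `ℓ i * t` and therefore every `∑ i, c i * ℓ i * t`. -/

lemma Nat.card_subtype_fin_add {n₁ n₂ : ℕ} (P : Fin (n₁ + n₂) → Prop) :
    Nat.card {i // P i} =
      Nat.card {i : Fin n₁ // P (Fin.castAdd n₂ i)} +
      Nat.card {i : Fin n₂ // P (Fin.natAdd n₁ i)} := by
  rw [← Nat.card_sum]
  refine Nat.card_congr <| (Equiv.subtypeEquiv finSumFinEquiv fun _ => Iff.rfl).symm.trans <|
    Equiv.subtypeSum.trans <| Equiv.sumCongr (Equiv.subtypeEquivRight fun _ => ?_)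
      (Equiv.subtypeEquivRight fun _ => ?_) <;> simp

lemma Nat.card_subtype_fin_add_prod {n₁ n₂ : ℕ} {α : Type*} [Finite α]
    (P : Fin (n₁ + n₂) × α → Prop) :
    Nat.card {p // P p} =
      Nat.card {p : Fin n₁ × α // P (Fin.castAdd n₂ p.1, p.2)} +
      Nat.card {p : Fin n₂ × α // P (Fin.natAdd n₁ p.1, p.2)} := by
  rw [← Nat.card_sum]
  refine Nat.card_congr <| (Equiv.subtypeEquiv ((Equiv.sumProdDistrib _ _ _).symm.trans
      (Equiv.prodCongr finSumFinEquiv (Equiv.refl α))) fun _ => Iff.rfl).symm.trans <|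
    Equiv.subtypeSum.trans <| Equiv.sumCongr (Equiv.subtypeEquivRight fun _ => ?_)
      (Equiv.subtypeEquivRight fun _ => ?_) <;> simp

section Append

variable {t n₁ n₂ : ℕ} {D₁ : Fin n₁ → Fin t → Fin t} {D₂ : Fin n₂ → Fin t → Fin t}

lemma designPairCount_append (d : ℕ) (x y : Fin t) :
    designPairCount (n₁ + n₂) t (Fin.append D₁ D₂) d x y =
      designPairCount n₁ t D₁ d x y + designPairCount n₂ t D₂ d x y := by
  simp only [designPairCount, Nat.card_subtype_fin_add_prod, Fin.append_left, Fin.append_right]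

lemma IsUniformDesign.append (h₁ : IsUniformDesign n₁ t D₁) (h₂ : IsUniformDesign n₂ t D₂) :
    IsUniformDesign (n₁ + n₂) t (Fin.append D₁ D₂) := by
  obtain ⟨hdvd₁, hbij₁, hcol₁⟩ := h₁
  obtain ⟨hdvd₂, hbij₂, hcol₂⟩ := h₂
  refine ⟨dvd_add hdvd₁ hdvd₂, fun i => i.addCases (fun i => ?left) (fun i => ?right),
    fun j x => ?column⟩
  case left => simpa only [Fin.append_left] using hbij₁ i
  case right => simpa only [Fin.append_right] using hbij₂ i
  case column =>
    rw [Nat.card_subtype_fin_add, Nat.add_div_of_dvd_right hdvd₁]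
    simp only [Fin.append_left, Fin.append_right, hcol₁, hcol₂]

lemma IsRomanDesign.append {k : ℕ} (h₁ : IsRomanDesign n₁ t k D₁)
    (h₂ : IsRomanDesign n₂ t k D₂) :
    IsRomanDesign (n₁ + n₂) t k (Fin.append D₁ D₂) := by
  refine ⟨h₁.1.append h₂.1, fun d hd₁ hdk x y hxy => ?_⟩
  rw [designPairCount_append, Nat.add_div_of_dvd_right h₁.1.1]
  exact Nat.add_le_add (h₁.2 d hd₁ hdk x y hxy) (h₂.2 d hd₁ hdk x y hxy)

end Append

lemma isRomanDesign_zero (t k : ℕ) (D : Fin 0 → Fin t → Fin t) : IsRomanDesign 0 t k D := by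
  refine ⟨⟨dvd_zero t, fun i => i.elim0, fun _ _ => by simp⟩, fun _ _ _ _ _ _ => ?_⟩
  simp [designPairCount]

def romanDesignSizes (t k : ℕ) : AddSubmonoid ℕ where
  carrier := {n | ∃ D : Fin n → Fin t → Fin t, IsRomanDesign n t k D}
  zero_mem' := ⟨Fin.elim0, isRomanDesign_zero t k _⟩
  add_mem' := fun ⟨D₁, h₁⟩ ⟨D₂, h₂⟩ => ⟨Fin.append D₁ D₂, h₁.append h₂⟩

theorem roman_design_stack_general (t k m : ℕ)
    (ℓ : Fin m → ℕ)
    (hdes : ∀ i, ∃ D : Fin (ℓ i * t) → Fin t → Fin t, IsRomanDesign (ℓ i * t) t k D)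
    (c : Fin m → ℕ) (n : ℕ) (hn : n = (∑ i, c i * ℓ i) * t) :
    ∃ D : Fin n → Fin t → Fin t, IsRomanDesign n t k D := by
  have hn' : n = ∑ i, c i • (ℓ i * t) := by
    simp only [hn, Finset.sum_mul, smul_eq_mul, mul_assoc]
  show n ∈ romanDesignSizes t k
  exact hn' ▸ sum_mem fun i _ => nsmul_mem (hdes i) (c i)

theorem roman_design_stack (t k m : ℕ) (ht : 0 < t) (hk : 0 < k)
    (ℓ : Fin m → ℕ) (hℓ : ∀ i, 0 < ℓ i)
    (hdes : ∀ i, ∃ D : Fin (ℓ i * t) → Fin t → Fin t, IsRomanDesign (ℓ i * t) t k D)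
    (c : Fin m → ℕ) (n : ℕ) (hn : n = (∑ i, c i * ℓ i) * t) (hpos : 0 < n) :
    ∃ D : Fin n → Fin t → Fin t, IsRomanDesign n t k D :=
  roman_design_stack_general t k m ℓ hdes c n hn
end

section
/- Let G be a finite group of order t ≥ 2 and let k, ℓ be positive integers with k ≤ t − 1. If G has a Roman-k ℓ-tuple, then there exists an ℓt × t Roman-k design. -/
/-- A Roman-`k` `ℓ`-tuple for a group `G` of order `t`: a sequence of `ℓ` orderings
of the elements of `G` such that for each `1 ≤ d ≤ k` and each non-identity `g`,
the number of pairs `(r, j)` with `(a r j)⁻¹ * (a r (j + d)) = g` is at most `ℓ`. -/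
def IsRomanTuple (G : Type*) [Group G] [Fintype G] (t k ℓ : ℕ)
    (a : Fin ℓ → Fin t → G) : Prop :=
  (∀ r : Fin ℓ, Function.Bijective (a r)) ∧
  ∀ d : ℕ, 1 ≤ d → d ≤ k → ∀ g : G, g ≠ 1 →
    Nat.card {p : Fin ℓ × Fin t //
      ∃ h : (p.2 : ℕ) + d < t, (a p.1 p.2)⁻¹ * a p.1 ⟨(p.2 : ℕ) + d, h⟩ = g} ≤ ℓ

/-!
Identify `G` with `Fin t` and take as rows the left translates `j ↦ g * a r j` of the orderings
of the tuple, one row for each pair `(r, g)`. Translating does not change the differences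
`(a r j)⁻¹ * a r (j + d)`, so two distinct treatments `x ≠ y` at distance `d` in some row
force the non-identity difference `x⁻¹ * y` in the tuple at the same position, and the row is
recovered from that position and `x`. Each column is uniform because, for each `r`, exactly one
translate puts a given element at a given position.
-/

section TupleDesign

variable {G : Type*} [Group G] {t ℓ : ℕ}

noncomputable def tupleDifferenceCount (a : Fin ℓ → Fin t → G) (d : ℕ) (g : G) : ℕ :=
  Nat.card {p : Fin ℓ × Fin t //
    ∃ h : (p.2 : ℕ) + d < t, (a p.1 p.2)⁻¹ * a p.1 ⟨(p.2 : ℕ) + d, h⟩ = g}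

/-- Row `i ↔ (r, s)` of the design is the ordering `a r` translated on the left by `e.symm s`. -/
def tupleDesign (e : G ≃ Fin t) (a : Fin ℓ → Fin t → G) : Fin (ℓ * t) → Fin t → Fin t :=
  fun i j => e (e.symm (finProdFinEquiv.symm i).2 * a (finProdFinEquiv.symm i).1 j)

variable (e : G ≃ Fin t) (a : Fin ℓ → Fin t → G)

theorem tupleDesign_eq_iff (i : Fin (ℓ * t)) (j x : Fin t) :
    tupleDesign e a i j = x ↔
      e.symm (finProdFinEquiv.symm i).2 * a (finProdFinEquiv.symm i).1 j = e.symm x :=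
  e.eq_symm_apply.symm

theorem tupleDesign_bijective (hbij : ∀ r, Function.Bijective (a r)) (i : Fin (ℓ * t)) :
    Function.Bijective (tupleDesign e a i) :=
  ((Equiv.mulLeft _).trans e).bijective.comp (hbij _)

def tupleDesignColumnEquiv (j x : Fin t) :
    {i : Fin (ℓ * t) // tupleDesign e a i j = x} ≃ Fin ℓ where
  toFun i := (finProdFinEquiv.symm i.1).1
  invFun r := ⟨finProdFinEquiv (r, e (e.symm x * (a r j)⁻¹)), by
    simp [tupleDesign_eq_iff]⟩
  left_inv := by
    rintro ⟨i, hi⟩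
    rw [tupleDesign_eq_iff, ← eq_mul_inv_iff_mul_eq, e.symm_apply_eq] at hi
    apply Subtype.ext
    simp only [← hi, Prod.mk.eta, Equiv.apply_symm_apply]
  right_inv r := by simp

theorem card_tupleDesign_column (j x : Fin t) :
    Nat.card {i : Fin (ℓ * t) // tupleDesign e a i j = x} = ℓ := by
  rw [Nat.card_congr (tupleDesignColumnEquiv e a j x), Nat.card_eq_fintype_card, Fintype.card_fin]

theorem inv_mul_eq_inv_mul_of_mul_eq {s u v x y : G} (hx : s * u = x) (hy : s * v = y) :
    u⁻¹ * v = x⁻¹ * y := by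
  rw [← hx, ← hy]
  group

theorem designPairCount_tupleDesign_le (d : ℕ) (x y : Fin t) :
    designPairCount (ℓ * t) t (tupleDesign e a) d x y ≤
      tupleDifferenceCount a d ((e.symm x)⁻¹ * e.symm y) := by
  let f : {p : Fin (ℓ * t) × Fin t // ∃ h : (p.2 : ℕ) + d < t,
      tupleDesign e a p.1 p.2 = x ∧ tupleDesign e a p.1 ⟨(p.2 : ℕ) + d, h⟩ = y} →
      {p : Fin ℓ × Fin t // ∃ h : (p.2 : ℕ) + d < t,
        (a p.1 p.2)⁻¹ * a p.1 ⟨(p.2 : ℕ) + d, h⟩ = (e.symm x)⁻¹ * e.symm y} :=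
    fun p => ⟨((finProdFinEquiv.symm p.1.1).1, p.1.2), by
      obtain ⟨h, hx, hy⟩ := p.2
      rw [tupleDesign_eq_iff] at hx hy
      exact ⟨h, inv_mul_eq_inv_mul_of_mul_eq hx hy⟩⟩
  refine Nat.card_le_card_of_injective f ?_
  rintro ⟨⟨i, j⟩, hp⟩ ⟨⟨i', j'⟩, hp'⟩ hf
  have hx := hp.choose_spec.1
  have hx' := hp'.choose_spec.1
  obtain ⟨hr, (hj : j = j')⟩ := Prod.ext_iff.mp (congrArg Subtype.val hf)
  rw [tupleDesign_eq_iff] at hx hx'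
  rw [← hx', ← hr, ← hj, mul_left_inj, e.symm.apply_eq_iff_eq] at hx
  exact Subtype.ext (Prod.ext (finProdFinEquiv.symm.injective (Prod.ext hr hx)) hj)

end TupleDesign

theorem roman_design_of_roman_tuple_general {G : Type*} [Group G] [Fintype G]
    (t k ℓ : ℕ) (ht : Fintype.card G = t)
    (a : Fin ℓ → Fin t → G) (ha : IsRomanTuple G t k ℓ a) :
    ∃ D : Fin (ℓ * t) → Fin t → Fin t, IsRomanDesign (ℓ * t) t k D := by
  obtain ⟨hbij, hcount⟩ := ha
  let e : G ≃ Fin t := Fintype.equivFinOfCardEq ht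
  have hrows : ℓ * t / t = ℓ := Nat.mul_div_cancel ℓ (ht ▸ Fintype.card_pos)
  refine ⟨tupleDesign e a, ⟨dvd_mul_left t ℓ, tupleDesign_bijective e a hbij, ?_⟩, ?_⟩
  · intro j x
    rw [hrows, card_tupleDesign_column]
  · intro d hd1 hdk x y hxy
    have hg : (e.symm x)⁻¹ * e.symm y ≠ 1 :=
      fun h => hxy (e.symm.injective (inv_mul_eq_one.mp h))
    rw [hrows]
    exact (designPairCount_tupleDesign_le e a d x y).trans (hcount d hd1 hdk _ hg)

theorem roman_design_of_roman_tuple {G : Type*} [Group G] [Fintype G]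
    (t k ℓ : ℕ) (ht : Fintype.card G = t) (ht2 : 2 ≤ t)
    (hk : 0 < k) (hkt : k ≤ t - 1) (hℓ : 0 < ℓ)
    (a : Fin ℓ → Fin t → G) (ha : IsRomanTuple G t k ℓ a) :
    ∃ D : Fin (ℓ * t) → Fin t → Fin t, IsRomanDesign (ℓ * t) t k D :=
  roman_design_of_roman_tuple_general t k ℓ ht a ha
end

section
/- Let G be a finite group of order t with an automorphism α of order ℓ, and let k be a positive integer with k ≤ t − 1. If a is a Roman-k pseudoterrace for G with respect to α, then the sequence of orderings (α¹ ∘ a, α² ∘ a, …, α^ℓ ∘ a) is a Roman-k ℓ-tuple for G. -/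
/-- The cycle (orbit) of `g` under an automorphism `α` of order `ℓ`:
`{α^s g : 1 ≤ s ≤ ℓ}`. -/
def mulCycle {G : Type*} [Group G] (α : MulAut G) (ℓ : ℕ) (g : G) : Set G :=
  {x | ∃ s : ℕ, 1 ≤ s ∧ s ≤ ℓ ∧ (α ^ s) g = x}

/-- A Roman-`k` pseudoterrace for `G` with respect to an automorphism `α` of order `ℓ`:
an ordering `a` of the elements of `G` such that for each non-identity `g` and each
`1 ≤ d ≤ k`, the number of indices `j` with `(a j)⁻¹ * a (j + d)` in the cycle of `g`
is at most the size of that cycle. -/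
def IsRomanPseudoterrace {G : Type*} [Group G] [Fintype G] (t k : ℕ)
    (α : MulAut G) (ℓ : ℕ) (a : Fin t → G) : Prop :=
  Function.Bijective a ∧
  ∀ g : G, g ≠ 1 → ∀ d : ℕ, 1 ≤ d → d ≤ k →
    Nat.card {j : Fin t //
        ∃ h : (j : ℕ) + d < t, (a j)⁻¹ * a ⟨(j : ℕ) + d, h⟩ ∈ mulCycle α ℓ g}
      ≤ Nat.card (mulCycle α ℓ g)

/-!
Write `x_j = (a j)⁻¹ * a (j + d)` and let `C` be the cycle of `g`. A pair `(r, j)` is counted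
exactly when `α^(r+1) x_j = g`, which forces `x_j ∈ C`. For a fixed `x`, the solutions `r` number
at most `ℓ / |C|`: choosing `α^(s_y) g = y` for each `y ∈ C`, the map `(r, y) ↦ s_y + r + 1 mod ℓ`
is injective, since its value recovers `y = α^(s_y + r + 1) x` and then `r`. The pseudoterrace
condition allows at most `|C|` positions `j` with `x_j ∈ C`, so there are at most `ℓ` pairs.
-/

theorem card_subtype_prod_le_mul {R J : Type*} [Finite R] [Finite J]
    {S : R × J → Prop} {T : J → Prop} {m : ℕ} (hST : ∀ p, S p → T p.2)
    (hfiber : ∀ j, T j → Nat.card {r // S (r, j)} ≤ m) :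
    Nat.card {p // S p} ≤ Nat.card {j // T j} * m := by
  classical
  have := Fintype.ofFinite J
  calc Nat.card {p // S p}
      ≤ Nat.card (Σ j : {j // T j}, {r // S (r, j)}) :=
        Nat.card_le_card_of_injective (fun p => ⟨⟨p.1.2, hST _ p.2⟩, ⟨p.1.1, p.2⟩⟩)
          (by rintro ⟨⟨r, j⟩, _⟩ ⟨⟨r', j'⟩, _⟩ h; simp only [Sigma.mk.injEq] at h; aesop)
    _ = ∑ j : {j // T j}, Nat.card {r // S (r, j)} := Nat.card_sigma
    _ ≤ ∑ _j : {j // T j}, m := Finset.sum_le_sum fun j _ => hfiber j j.2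
    _ = Nat.card {j // T j} * m := by simp [Nat.card_eq_fintype_card]

section mulCycle

variable {G : Type*} [Group G] (α : MulAut G)

theorem pow_apply_mem_mulCycle (hα : 0 < orderOf α) (g : G) (n : ℕ) :
    (α ^ n) g ∈ mulCycle α (orderOf α) g := by
  refine ⟨(n + orderOf α - 1) % orderOf α + 1, by omega, Nat.mod_lt _ hα, ?_⟩
  suffices (n + orderOf α - 1) % orderOf α + 1 ≡ n [MOD orderOf α] by
    rw [pow_eq_pow_iff_modEq.mpr this]
  calc (n + orderOf α - 1) % orderOf α + 1 ≡ n + orderOf α - 1 + 1 [MOD orderOf α] :=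
        (Nat.mod_modEq _ _).add_right 1
    _ = n + orderOf α := by omega
    _ ≡ n [MOD orderOf α] := Nat.add_modEq_right

theorem mem_mulCycle_of_pow_apply_eq (hα : 0 < orderOf α) {x g : G} {n : ℕ}
    (h : (α ^ n) x = g) : x ∈ mulCycle α (orderOf α) g := by
  obtain ⟨m, hm⟩ : (α ^ n)⁻¹ ∈ Submonoid.powers α :=
    (orderOf_pos_iff.mp hα).mem_powers_iff_mem_zpowers.mpr
      (inv_mem (Subgroup.npow_mem_zpowers α n))
  have hx : (α ^ m) g = x := by
    rw [show α ^ m = (α ^ n)⁻¹ from hm, ← h, MulAut.inv_apply_self]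
  exact hx ▸ pow_apply_mem_mulCycle α hα g m

theorem card_pow_succ_apply_eq_mul_card_mulCycle_le (x g : G) :
    Nat.card {r : Fin (orderOf α) // (α ^ ((r : ℕ) + 1)) x = g} *
      Nat.card (mulCycle α (orderOf α) g) ≤ orderOf α := by
  rw [← Nat.card_prod]
  choose s hs using fun y : mulCycle α (orderOf α) g => y.2
  have hrecover (r : Fin (orderOf α)) (y : mulCycle α (orderOf α) g)
      (hr : (α ^ ((r : ℕ) + 1)) x = g) : (α ^ (s y + ((r : ℕ) + 1))) x = y := by
    rw [pow_add, MulAut.mul_apply, hr, (hs y).2.2]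
  refine (Nat.card_le_card_of_injective (β := Fin (orderOf α))
    (fun p => ⟨(s p.2 + ((p.1 : ℕ) + 1)) % orderOf α, Nat.mod_lt _ p.1.1.pos⟩) ?_).trans_eq
    (Nat.card_eq_fintype_card.trans (Fintype.card_fin _))
  rintro ⟨⟨r₁, h₁⟩, y₁⟩ ⟨⟨r₂, h₂⟩, y₂⟩ heq
  have hmod : s y₁ + ((r₁ : ℕ) + 1) ≡ s y₂ + ((r₂ : ℕ) + 1) [MOD orderOf α] :=
    Fin.mk.inj heq
  have hy : y₁ = y₂ := Subtype.ext <| by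
    rw [← hrecover r₁ y₁ h₁, ← hrecover r₂ y₂ h₂, pow_eq_pow_iff_modEq.mpr hmod]
  subst hy
  have hr : r₁ = r₂ :=
    Fin.ext ((hmod.add_left_cancel' _).add_right_cancel' 1 |>.eq_of_lt_of_lt r₁.2 r₂.2)
  subst hr
  rfl

theorem card_pow_succ_apply_eq_le_div [Finite G] (x g : G) :
    Nat.card {r : Fin (orderOf α) // (α ^ ((r : ℕ) + 1)) x = g} ≤
      orderOf α / Nat.card (mulCycle α (orderOf α) g) := by
  rcases isEmpty_or_nonempty {r : Fin (orderOf α) // (α ^ ((r : ℕ) + 1)) x = g} with h | ⟨r, -⟩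
  · simp
  have hg : g ∈ mulCycle α (orderOf α) g := by simpa using pow_apply_mem_mulCycle α r.pos g 0
  rw [Nat.le_div_iff_mul_le (Nat.card_pos_iff.mpr ⟨⟨_, hg⟩, Set.toFinite _⟩)]
  exact card_pow_succ_apply_eq_mul_card_mulCycle_le α x g

end mulCycle

theorem roman_tuple_of_pseudoterrace_general {G : Type*} [Group G] [Fintype G]
    (t k ℓ : ℕ)
    (α : MulAut G) (hα : orderOf α = ℓ)
    (a : Fin t → G) (ha : IsRomanPseudoterrace t k α ℓ a) :
    IsRomanTuple G t k ℓ (fun r j => (α ^ ((r : ℕ) + 1)) (a j)) := by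
  subst hα
  obtain ⟨ha_bij, ha_count⟩ := ha
  refine ⟨fun r => (α ^ ((r : ℕ) + 1)).bijective.comp ha_bij, fun d hd hdk g hg => ?_⟩
  set C := mulCycle α (orderOf α) g
  calc _ = Nat.card {p : Fin (orderOf α) × Fin t // ∃ h : (p.2 : ℕ) + d < t,
          (α ^ ((p.1 : ℕ) + 1)) ((a p.2)⁻¹ * a ⟨p.2 + d, h⟩) = g} := by
        simp only [map_mul, map_inv]
    _ ≤ Nat.card {j : Fin t // ∃ h : (j : ℕ) + d < t, (a j)⁻¹ * a ⟨j + d, h⟩ ∈ C} *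
          (orderOf α / Nat.card C) :=
        card_subtype_prod_le_mul
          (fun p ⟨h, hp⟩ => ⟨h, mem_mulCycle_of_pow_apply_eq α p.1.pos hp⟩)
          (fun j ⟨h, _⟩ => (Nat.card_congr (Equiv.subtypeEquivRight fun _ =>
            exists_prop_of_true h)).trans_le
              (card_pow_succ_apply_eq_le_div α ((a j)⁻¹ * a ⟨j + d, h⟩) g))
    _ ≤ Nat.card C * (orderOf α / Nat.card C) := Nat.mul_le_mul_right _ (ha_count g hg d hd hdk)
    _ ≤ orderOf α := Nat.mul_div_le _ _

theorem roman_tuple_of_pseudoterrace {G : Type*} [Group G] [Fintype G]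
    (t k ℓ : ℕ) (ht : Fintype.card G = t) (hk : 0 < k) (hkt : k ≤ t - 1)
    (α : MulAut G) (hα : orderOf α = ℓ)
    (a : Fin t → G) (ha : IsRomanPseudoterrace t k α ℓ a) :
    IsRomanTuple G t k ℓ (fun r j => (α ^ ((r : ℕ) + 1)) (a j)) :=
  roman_tuple_of_pseudoterrace_general t k ℓ α hα a ha
end

section
/- Let p be an odd prime and ρ a primitive root of p (an element of ZMod p generating the multiplicative group of units). Let r = ρ · (ρ − 1)⁻¹ in ZMod p and let α be the automorphism of the additive group ZMod p given by x ↦ r·x, of order equal to the multiplicative order ℓ of r. Then the sequence (0, ρ, ρ², …, ρ^{p−1}) is a Roman-1 pseudoterrace for ZMod p with respect to α; equivalently, for each non-zero g ∈ ZMod p, the number of indices j with 1 ≤ j ≤ p − 1 for which the consecutive difference a_{j+1} − a_j lies in the orbit {r^s · g : 1 ≤ s ≤ ℓ} is at most the size of that orbit. -/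
/-!
The consecutive differences of `0, ρ, ρ², …, ρ^(p-1)` are `ρ` and then `ρ^j (ρ - 1)` for
`1 ≤ j ≤ p - 2`. Since `ρ - 1 = r⁻¹ ρ` and a cycle of `x ↦ r x` is also closed under `x ↦ r⁻¹ x`,
sending the index `j` to `ρ^j (ρ - 1)` maps every index whose difference lies in a cycle into
that cycle, and it is injective because `ρ⁰, …, ρ^(p-2)` are distinct.
-/

/-- The cycle `ḡ` of `g` under `x ↦ r x`; it is empty when `r` has infinite order, since then
`orderOf r = 0`. -/
def powCycle {M : Type*} [Monoid M] (r g : M) : Set M :=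
  {x | ∃ s : ℕ, 1 ≤ s ∧ s ≤ orderOf r ∧ r ^ s * g = x}

def primitiveRootSeq {M₀ : Type*} [MonoidWithZero M₀] (ρ : M₀) (n : ℕ) : Fin n → M₀ :=
  fun j ↦ if (j : ℕ) = 0 then 0 else ρ ^ (j : ℕ)

section GroupWithZero

variable {G₀ : Type*} [GroupWithZero G₀]

lemma inv_mul_mem_powCycle {r g x : G₀} (hx : x ∈ powCycle r g) : r⁻¹ * x ∈ powCycle r g := by
  obtain ⟨s, hs, hsr, rfl⟩ := hx
  have hr : r ≠ 0 := ne_of_apply_ne orderOf (by rw [orderOf_zero]; omega)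
  obtain ⟨k, rfl⟩ : ∃ k, s = k + 1 := Nat.exists_eq_succ_of_ne_zero (by omega)
  rw [pow_succ', mul_assoc, inv_mul_cancel_left₀ hr]
  rcases k with _ | k
  · exact ⟨orderOf r, by omega, le_rfl, by rw [pow_orderOf_eq_one, pow_zero]⟩
  · exact ⟨k + 1, by omega, by omega, rfl⟩

lemma primitiveRootSeq_injective {ρ : G₀} (hρ : ρ ≠ 0) {n : ℕ} (hn : n ≤ orderOf ρ + 1) :
    Function.Injective (primitiveRootSeq ρ n) := by
  intro i j hij
  have := i.isLt
  have := j.isLt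
  apply Fin.ext
  simp only [primitiveRootSeq] at hij
  split_ifs at hij with hi hj hj
  · omega
  · exact absurd hij.symm (pow_ne_zero _ hρ)
  · exact absurd hij (pow_ne_zero _ hρ)
  · obtain ⟨i', hi'⟩ := Nat.exists_eq_succ_of_ne_zero hi
    obtain ⟨j', hj'⟩ := Nat.exists_eq_succ_of_ne_zero hj
    rw [hi', hj', pow_succ, pow_succ] at hij
    have := pow_injOn_Iio_orderOf (by simp only [Set.mem_Iio]; omega)
      (by simp only [Set.mem_Iio]; omega) (mul_right_cancel₀ hρ hij)
    omega

end GroupWithZero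

section Field

variable {F : Type*} [Field F]

lemma pow_mul_sub_one_mem_powCycle {ρ g : F} (hρ : ρ ≠ 0) {n : ℕ} (j : Fin n)
    (hj : (j : ℕ) + 1 < n)
    (hmem : primitiveRootSeq ρ n ⟨j + 1, hj⟩ - primitiveRootSeq ρ n j
      ∈ powCycle (ρ * (ρ - 1)⁻¹) g) :
    ρ ^ (j : ℕ) * (ρ - 1) ∈ powCycle (ρ * (ρ - 1)⁻¹) g := by
  simp only [primitiveRootSeq, Nat.add_eq_zero_iff, one_ne_zero, and_false, if_false] at hmem
  split_ifs at hmem with h0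
  · have hsub : (ρ * (ρ - 1)⁻¹)⁻¹ * ρ = ρ - 1 := by
      rw [mul_inv, inv_inv, mul_comm ρ⁻¹, mul_assoc, inv_mul_cancel₀ hρ, mul_one]
    rw [h0, zero_add, pow_one, sub_zero] at hmem
    rw [h0, pow_zero, one_mul]
    simpa only [hsub] using inv_mul_mem_powCycle hmem
  · rwa [pow_succ, ← mul_sub_one] at hmem

lemma card_primitiveRootSeq_sub_mem_powCycle_le [Finite F] {ρ : F} (hρ₀ : ρ ≠ 0) (hρ₁ : ρ ≠ 1)
    {n : ℕ} (hn : n ≤ orderOf ρ + 1) (g : F) :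
    Nat.card {j : Fin n // ∃ h : (j : ℕ) + 1 < n,
        primitiveRootSeq ρ n ⟨j + 1, h⟩ - primitiveRootSeq ρ n j ∈ powCycle (ρ * (ρ - 1)⁻¹) g}
      ≤ Nat.card (powCycle (ρ * (ρ - 1)⁻¹) g) := by
  refine Nat.card_le_card_of_injective
    (fun j ↦ ⟨ρ ^ (j.1 : ℕ) * (ρ - 1), pow_mul_sub_one_mem_powCycle hρ₀ j.1 j.2.1 j.2.2⟩) ?_
  rintro ⟨i, hi, _⟩ ⟨j, hj, _⟩ hij
  have hpow : ρ ^ (i : ℕ) = ρ ^ (j : ℕ) :=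
    mul_right_cancel₀ (sub_ne_zero.mpr hρ₁) (congrArg Subtype.val hij)
  exact Subtype.ext (Fin.ext (pow_injOn_Iio_orderOf (by simp only [Set.mem_Iio]; omega)
    (by simp only [Set.mem_Iio]; omega) hpow))

end Field

theorem primitive_root_construction_is_roman_pseudoterrace
    (p : ℕ) (hp : Nat.Prime p) (hodd : Odd p)
    (ρ : ZMod p) (hρ : orderOf ρ = p - 1)
    (r : ZMod p) (hr : r = ρ * (ρ - 1)⁻¹)
    (ℓ : ℕ) (hℓ : ℓ = orderOf r)
    (a : Fin p → ZMod p)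
    (haseq : ∀ j : Fin p, a j = if (j : ℕ) = 0 then 0 else ρ ^ (j : ℕ)) :
    Function.Bijective a ∧
    ∀ g : ZMod p, g ≠ 0 →
      Nat.card {j : Fin p // ∃ h : (j : ℕ) + 1 < p,
          a ⟨(j : ℕ) + 1, h⟩ - a j ∈ {x : ZMod p | ∃ s : ℕ, 1 ≤ s ∧ s ≤ ℓ ∧ r ^ s * g = x}}
        ≤ Nat.card {x : ZMod p | ∃ s : ℕ, 1 ≤ s ∧ s ≤ ℓ ∧ r ^ s * g = x} := by
  have : Fact p.Prime := ⟨hp⟩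
  have ha : a = primitiveRootSeq ρ p := funext haseq
  subst ha hℓ hr
  have hp₃ : 3 ≤ p := by
    obtain ⟨m, hm⟩ := hodd
    have := hp.two_le
    omega
  have hρ₀ : ρ ≠ 0 := by
    rintro rfl
    rw [orderOf_zero] at hρ
    omega
  have hρ₁ : ρ ≠ 1 := by
    rintro rfl
    rw [orderOf_one] at hρ
    omega
  exact ⟨(Fintype.bijective_iff_injective_and_card _).mpr
      ⟨primitiveRootSeq_injective hρ₀ (by omega), by simp⟩,
    fun g _ ↦ card_primitiveRootSeq_sub_mem_powCycle_le hρ₀ hρ₁ (by omega) g⟩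
end

section
/- The three orderings (0,1,5,4,2,3,6), (0,2,3,1,4,6,5), (0,4,6,2,1,5,3) of ZMod 7 form a Vatican triple for ZMod 7: for each 1 ≤ d ≤ 6 and each non-zero g ∈ ZMod 7, the number of pairs (r, j) with r ∈ {1,2,3}, 0 ≤ j < 7 − d and a_r(j+d) − a_r(j) = g is at most 3. -/
/-- A Roman-`k` `ℓ`-tuple for an additive group `G` of order `t`. -/
def IsAddRomanTuple (G : Type*) [AddGroup G] (t k ℓ : ℕ)
    (a : Fin ℓ → Fin t → G) : Prop :=
  (∀ r : Fin ℓ, Function.Bijective (a r)) ∧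
  ∀ d : ℕ, 1 ≤ d → d ≤ k → ∀ g : G, g ≠ 0 →
    Nat.card {p : Fin ℓ × Fin t //
      ∃ h : (p.2 : ℕ) + d < t, a p.1 ⟨(p.2 : ℕ) + d, h⟩ - a p.1 p.2 = g} ≤ ℓ

/-- A Vatican `ℓ`-tuple (for a group of order `t`) is a Roman-`(t-1)` `ℓ`-tuple. -/
def IsAddVaticanTuple (G : Type*) [AddGroup G] (t ℓ : ℕ)
    (a : Fin ℓ → Fin t → G) : Prop :=
  IsAddRomanTuple G t (t - 1) ℓ a

open Finset

section DifferenceCount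

variable {G : Type*} [AddGroup G] [DecidableEq G] {t ℓ : ℕ}

def differenceCount (a : Fin ℓ → Fin t → G) (d : ℕ) (g : G) : ℕ :=
  #{p : Fin ℓ × Fin t | ∃ h : (p.2 : ℕ) + d < t, a p.1 ⟨(p.2 : ℕ) + d, h⟩ - a p.1 p.2 = g}

theorem natCard_difference_eq_differenceCount (a : Fin ℓ → Fin t → G) (d : ℕ) (g : G) :
    Nat.card {p : Fin ℓ × Fin t //
      ∃ h : (p.2 : ℕ) + d < t, a p.1 ⟨(p.2 : ℕ) + d, h⟩ - a p.1 p.2 = g} =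
      differenceCount a d g := by
  rw [Nat.card_eq_fintype_card, Fintype.card_subtype, differenceCount]

theorem isAddRomanTuple_iff_differenceCount_le {k : ℕ} (a : Fin ℓ → Fin t → G) :
    IsAddRomanTuple G t k ℓ a ↔
      (∀ r, Function.Bijective (a r)) ∧
        ∀ d ∈ Icc 1 k, ∀ g : G, g ≠ 0 → differenceCount a d g ≤ ℓ := by
  simp only [IsAddRomanTuple, natCard_difference_eq_differenceCount, mem_Icc, and_imp]

end DifferenceCount

theorem vatican_triple_zmod7 :
    IsAddVaticanTuple (ZMod 7) 7 3
      ![![0, 1, 5, 4, 2, 3, 6], ![0, 2, 3, 1, 4, 6, 5], ![0, 4, 6, 2, 1, 5, 3]] := by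
  rw [IsAddVaticanTuple, isAddRomanTuple_iff_differenceCount_le]
  decide
end

section
/- There is no 3-fold Vatican pseudoterrace for ZMod 9: for every automorphism α of ZMod 9 of order 3, no ordering of the elements of ZMod 9 is a Roman-8 (i.e., Vatican) pseudoterrace with respect to α. -/
/-!
An automorphism of `ZMod 9` is multiplication by a unit, and one of order `3` is
multiplication by `4` or `7`; so the cycles are the orbits `{g, 4g, 7g}`, namely `{3}`, `{6}`,
`{1, 4, 7}` and `{2, 5, 8}`, and a Vatican pseudoterrace is an ordering in which, for every lag,
the differences meet each orbit at most as often as it has elements. This condition only sees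
differences, and multiplication by a unit permutes the orbits preserving their sizes, so we
may assume that the ordering starts with `0, 1` or `0, 3`. A depth-first search over such
orderings, abandoning a prefix as soon as some lag overfills an orbit, then finds none.
-/

/-- The cycle (orbit) of `g` under an automorphism `α` of order `ℓ`:
`{α^s g : 1 ≤ s ≤ ℓ}`. -/
def addCycle {G : Type*} [AddGroup G] (α : AddAut G) (ℓ : ℕ) (g : G) : Set G :=
  {x | ∃ s : ℕ, 1 ≤ s ∧ s ≤ ℓ ∧ (s • α) g = x}

/-- A Roman-`k` pseudoterrace for an additive group `G` of order `t` with respect to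
an automorphism `α` of order `ℓ`: an ordering `a` of the elements of `G` such that for
each non-identity `g` and each `1 ≤ d ≤ k`, the number of indices `j` with
`a (j + d) - a j` in the cycle of `g` is at most the size of that cycle. -/
def IsAddRomanPseudoterrace {G : Type*} [AddGroup G] (t k : ℕ)
    (α : AddAut G) (ℓ : ℕ) (a : Fin t → G) : Prop :=
  Function.Bijective a ∧
  ∀ g : G, g ≠ 0 → ∀ d : ℕ, 1 ≤ d → d ≤ k →
    Nat.card {j : Fin t //
        ∃ h : (j : ℕ) + d < t, a ⟨(j : ℕ) + d, h⟩ - a j ∈ addCycle α ℓ g}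
      ≤ Nat.card (addCycle α ℓ g)

namespace List

section LagDiffs

variable {G : Type*} [AddGroup G]

def lagDiffs (l : List G) (d : ℕ) : List G :=
  zipWith (fun x y => y - x) l (l.drop d)

theorem lagDiffs_take (l : List G) (m d : ℕ) :
    (l.take m).lagDiffs d = (l.lagDiffs d).take (m - d) := by
  apply ext_getElem
  · simp [lagDiffs]; omega
  · intro n _ _
    simp [lagDiffs]

theorem length_lagDiffs (l : List G) (d : ℕ) : (l.lagDiffs d).length = l.length - d := by
  simp [lagDiffs]

theorem getElem_lagDiffs (l : List G) (d i : ℕ) (hi : i < (l.lagDiffs d).length) :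
    (l.lagDiffs d)[i] = l[i + d]'(by rw [length_lagDiffs] at hi; omega) -
      l[i]'(by rw [length_lagDiffs] at hi; omega) := by
  simp [lagDiffs, Nat.add_comm]

theorem countP_lagDiffs_take_lt {l : List G} {m d : ℕ} (hd : d ≤ m) (hm : m < l.length)
    (p : G → Bool) (hp : p (l[m] - l[m - d]) = true) :
    ((l.take m).lagDiffs d).countP p < (l.lagDiffs d).countP p := by
  have hlen : m - d < (l.lagDiffs d).length := by rw [length_lagDiffs]; omega
  have hnew : (l.lagDiffs d)[m - d] = l[m] - l[m - d] := by
    rw [getElem_lagDiffs]; congr 2; omega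
  calc ((l.take m).lagDiffs d).countP p
      < ((l.lagDiffs d).take (m - d + 1)).countP p := by
        rw [lagDiffs_take, take_succ_eq_append_getElem hlen, countP_append, hnew]
        simp [hp]
    _ ≤ (l.lagDiffs d).countP p := (take_sublist _ _).countP_le

theorem lagDiffs_eq_nil {l : List G} {d : ℕ} (h : l.length ≤ d) : l.lagDiffs d = [] := by
  simp [lagDiffs, drop_eq_nil_of_le h]

theorem lagDiffs_map {H : Type*} [AddGroup H] (f : G →+ H) (l : List G) (d : ℕ) :
    (l.map f).lagDiffs d = (l.lagDiffs d).map f := by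
  simp [lagDiffs, ← map_drop, zipWith_map, map_zipWith]

theorem lagDiffs_map_sub_const (l : List G) (c : G) (d : ℕ) :
    (l.map (· - c)).lagDiffs d = l.lagDiffs d := by
  simp [lagDiffs, ← map_drop, zipWith_map]

theorem lagDiffs_ofFn {t : ℕ} (a : Fin t → G) (d : ℕ) :
    (ofFn a).lagDiffs d =
      ofFn fun i : Fin (t - d) => a ⟨i + d, by omega⟩ - a ⟨i, by omega⟩ := by
  apply ext_getElem
  · simp [lagDiffs]
  · intro n _ _
    simp [lagDiffs, Nat.add_comm]

theorem countP_ofFn {α : Type*} {n : ℕ} (f : Fin n → α) (p : α → Bool) :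
    (ofFn f).countP p = (Finset.univ.filter fun i => p (f i)).card := by
  rw [ofFn_eq_map, countP_map, Fin.univ_def, countP_eq_length_filter]
  simp [Finset.card, Function.comp_def]

theorem countP_lagDiffs_ofFn {t : ℕ} (a : Fin t → G) (d : ℕ) (p : G → Bool) :
    ((ofFn a).lagDiffs d).countP p =
      Nat.card {j : Fin t // ∃ h : j + d < t, p (a ⟨j + d, h⟩ - a j)} := by
  classical
  rw [lagDiffs_ofFn, countP_ofFn, Nat.card_eq_fintype_card, Fintype.card_subtype]
  refine Finset.card_bij (fun i _ => Fin.castLE (by omega) i) ?_ ?_ ?_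
  · intro i hi
    simp only [Finset.mem_filter, Finset.mem_univ, true_and] at hi ⊢
    exact ⟨by simp; omega, hi⟩
  · intro i _ j _ h
    exact Fin.castLE_injective _ h
  · intro j hj
    simp only [Finset.mem_filter, Finset.mem_univ, true_and] at hj
    obtain ⟨h, hp⟩ := hj
    exact ⟨⟨j, by omega⟩, by simpa using hp, rfl⟩

end LagDiffs

section Completable

variable {α : Type*} [DecidableEq α]

/-- Whether `n` elements of `rest` can be appended to `p` one at a time, each passing `check`
against the list it extends. -/
def completable (check : List α → α → Bool) : ℕ → List α → List α → Bool
  | 0, _, _ => true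
  | n + 1, p, rest =>
      rest.any fun x => check p x && completable check n (p ++ [x]) (rest.erase x)

theorem completable_of_perm (check : List α → α → Bool) {s rest : List α} (p : List α)
    (hperm : rest ~ s)
    (hcheck : ∀ m (hm : m < (p ++ s).length), check ((p ++ s).take m) (p ++ s)[m] = true) :
    completable check s.length p rest = true := by
  induction s generalizing p rest with
  | nil => rfl
  | cons y s ih =>
    have hp : check p y = true := by simpa using hcheck p.length (by simp)
    have hy : y ∈ rest := hperm.mem_iff.mpr mem_cons_self
    have hrest : rest.erase y ~ s := by simpa using hperm.erase y
    have hnext := ih (p ++ [y]) hrest (by simpa using hcheck)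
    simp only [length_cons, completable, any_eq_true, Bool.and_eq_true]
    exact ⟨y, hy, hp, hnext⟩

end Completable

theorem Nodup.perm_of_length_eq_card {α : Type*} [Fintype α] [DecidableEq α] {l l' : List α}
    (h : l.Nodup) (h' : l'.Nodup) (hl : l.length = Fintype.card α)
    (hl' : l'.length = Fintype.card α) : l ~ l' := by
  have huniv : ∀ {l : List α}, l.Nodup → l.length = Fintype.card α → ∀ x, x ∈ l := by
    intro l h hl x
    rw [← mem_toFinset, Finset.eq_univ_of_card l.toFinset (by rw [toFinset_card_of_nodup h, hl])]
    exact Finset.mem_univ x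
  exact (perm_ext_iff_of_nodup h h').mpr fun x => by simp [huniv h hl, huniv h' hl']

end List

namespace ZMod

theorem addAut_apply {n : ℕ} (α : AddAut (ZMod n)) (x : ZMod n) : α x = α 1 * x := by
  rw [mul_comm, ← x.intCast_zmod_cast, ← zsmul_eq_mul, ← map_zsmul, zsmul_one]

theorem nsmul_addAut_apply {n : ℕ} (α : AddAut (ZMod n)) (s : ℕ) (x : ZMod n) :
    (s • α) x = α 1 ^ s * x := by
  induction s with
  | zero => simp
  | succ s ih => rw [succ_nsmul', AddAut.add_apply, ih, addAut_apply, pow_succ']; ring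

end ZMod

namespace ZMod9

theorem addAut_one_eq_four_or_seven {α : AddAut (ZMod 9)} (hα : addOrderOf α = 3) :
    α 1 = 4 ∨ α 1 = 7 := by
  have hcube : α 1 ^ 3 = 1 := by
    rw [← mul_one (α 1 ^ 3), ← ZMod.nsmul_addAut_apply, ← hα, addOrderOf_nsmul_eq_zero]; rfl
  have hne : α 1 ≠ 1 := by
    intro h1
    have : α = 0 := AddEquiv.ext fun x => by rw [ZMod.addAut_apply, h1, one_mul]; rfl
    simp [this] at hα
  revert hcube hne
  generalize α 1 = c
  revert c
  decide

/-- The least element of the orbit `{z, 4 * z, 7 * z}` of `z`. -/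
def orbitRep (z : ZMod 9) : ℕ := if 3 * z = 0 then z.val else z.val % 3

def orbitCard (z : ZMod 9) : ℕ := if 3 * z = 0 then 1 else 3

theorem orbitRep_eq_iff (z w : ZMod 9) :
    orbitRep z = orbitRep w ↔ z = w ∨ z = 4 * w ∨ z = 7 * w := by
  revert z w
  decide

theorem card_orbitRep_eq (w : ZMod 9) :
    Nat.card {z // orbitRep z = orbitRep w} = orbitCard w := by
  rw [Nat.card_eq_fintype_card, Fintype.card_subtype]
  revert w
  decide

theorem orbitRep_units_mul (u : (ZMod 9)ˣ) (z w : ZMod 9) :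
    orbitRep (u * z) = orbitRep (u * w) ↔ orbitRep z = orbitRep w := by
  simp only [orbitRep_eq_iff, mul_left_comm (4 : ZMod 9), mul_left_comm (7 : ZMod 9),
    Units.mul_right_inj]

theorem orbitCard_units_mul (u : (ZMod 9)ˣ) (z : ZMod 9) : orbitCard (u * z) = orbitCard z := by
  simp only [orbitCard, mul_left_comm (3 : ZMod 9), Units.mul_right_eq_zero]

theorem addCycle_eq {α : AddAut (ZMod 9)} (hα : addOrderOf α = 3) (g : ZMod 9) :
    addCycle α 3 g = {z | orbitRep z = orbitRep g} := by
  ext z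
  have hs : (∃ s : ℕ, 1 ≤ s ∧ s ≤ 3 ∧ α 1 ^ s * g = z) ↔
      α 1 * g = z ∨ α 1 ^ 2 * g = z ∨ α 1 ^ 3 * g = z := by
    constructor
    · rintro ⟨s, h1, h3, rfl⟩
      interval_cases s <;> simp
    · rintro (h | h | h)
      exacts [⟨1, le_rfl, by norm_num, by simpa using h⟩, ⟨2, by norm_num, by norm_num, h⟩,
        ⟨3, by norm_num, le_rfl, h⟩]
  simp only [addCycle, Set.mem_ofPred_eq, ZMod.nsmul_addAut_apply, hs, orbitRep_eq_iff]
  clear hs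
  rcases addAut_one_eq_four_or_seven hα with h | h <;> rw [h] <;> revert z g <;> decide

theorem exists_unit_mul_eq_one_or_three {z : ZMod 9} (hz : z ≠ 0) :
    ∃ u : (ZMod 9)ˣ, u * z = 1 ∨ u * z = 3 := by
  obtain ⟨u, v, huv, h⟩ : ∃ u v : ZMod 9, u * v = 1 ∧ (u * z = 1 ∨ u * z = 3) := by
    revert z
    decide
  exact ⟨⟨u, v, huv, by rw [mul_comm, huv]⟩, h⟩

/-- The list form of a Vatican pseudoterrace of `ZMod 9` for an automorphism of order `3`. -/
def IsOrbitBalanced (l : List (ZMod 9)) : Prop :=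
  ∀ d, 1 ≤ d → ∀ g : ZMod 9, g ≠ 0 →
    (l.lagDiffs d).countP (orbitRep · = orbitRep g) ≤ orbitCard g

theorem isOrbitBalanced_ofFn {α : AddAut (ZMod 9)} (hα : addOrderOf α = 3) {a : Fin 9 → ZMod 9}
    (ha : IsAddRomanPseudoterrace 9 8 α 3 a) : IsOrbitBalanced (List.ofFn a) := by
  intro d hd g hg
  rcases le_or_gt d 8 with hd8 | hd8
  · rw [List.countP_lagDiffs_ofFn, ← card_orbitRep_eq]
    have hcount := ha.2 g hg d hd hd8
    rw [addCycle_eq hα] at hcount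
    simp only [decide_eq_true_eq, Set.mem_ofPred_eq] at hcount ⊢
    exact hcount
  · rw [List.lagDiffs_eq_nil (by simp; omega)]
    exact Nat.zero_le _

theorem IsOrbitBalanced.map_units_mul_sub {l : List (ZMod 9)} (h : IsOrbitBalanced l)
    (u : (ZMod 9)ˣ) (c : ZMod 9) : IsOrbitBalanced (l.map fun x => u * (x - c)) := by
  intro d hd g hg
  have hmap : l.map (fun x => u * (x - c)) =
      (l.map (· - c)).map (AddMonoidHom.mulLeft (u : ZMod 9)) := by
    simp [Function.comp_def]
  have hg' : (↑u⁻¹ * g : ZMod 9) ≠ 0 := by simpa using hg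
  rw [hmap, List.lagDiffs_map, List.lagDiffs_map_sub_const, List.countP_map,
    ← orbitCard_units_mul u⁻¹]
  convert h d hd _ hg' using 2
  ext z
  simpa using orbitRep_units_mul u z (↑u⁻¹ * g)

def lagClasses (l : List (ZMod 9)) : List (List ℕ) :=
  (List.range l.length).map fun i => (l.lagDiffs (i + 1)).map orbitRep

/-- For each lag `d ≤ l.length`, the new difference `x - l[l.length - d]` still fits into its
orbit; `l.reverse` and `lagClasses l` are both indexed by `d - 1`. -/
def extendsBalanced (l : List (ZMod 9)) (x : ZMod 9) : Bool :=
  (List.zipWith (fun y cs => decide (cs.countP (· = orbitRep (x - y)) < orbitCard (x - y)))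
    l.reverse (lagClasses l)).and

theorem extendsBalanced_take {L : List (ZMod 9)} (hL : IsOrbitBalanced L) (hnd : L.Nodup)
    (m : ℕ) (hm : m < L.length) : extendsBalanced (L.take m) L[m] = true := by
  simp only [extendsBalanced, List.and, List.all_eq_true, id]
  intro b hb
  obtain ⟨i, hi, rfl⟩ := List.getElem_of_mem hb
  simp only [List.length_zipWith, List.length_reverse, lagClasses, List.length_map,
    List.length_range, List.length_take] at hi
  simp only [List.getElem_zipWith, List.getElem_reverse, lagClasses, List.getElem_map,
    List.getElem_range, List.getElem_take, List.length_take, decide_eq_true_eq]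
  simp only [min_eq_left hm.le, min_self, show m - 1 - i = m - (i + 1) by omega] at hi ⊢
  have hδ : L[m] - L[m - (i + 1)] ≠ 0 :=
    sub_ne_zero.mpr fun h => by have := (hnd.getElem_inj_iff).mp h; omega
  rw [List.countP_map]
  calc _ < (L.lagDiffs (i + 1)).countP (orbitRep · = orbitRep (L[m] - L[m - (i + 1)])) :=
        List.countP_lagDiffs_take_lt (by omega) hm _ (by simp)
    _ ≤ _ := hL (i + 1) (by omega) _ hδ

theorem not_completable_extendsBalanced : ∀ v ∈ ([1, 3] : List (ZMod 9)),
    List.completable extendsBalanced 7 [0, v] ([1, 2, 3, 4, 5, 6, 7, 8].erase v) = false := by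
  decide +kernel

theorem IsOrbitBalanced.exists_normalized {l : List (ZMod 9)} (hl : IsOrbitBalanced l)
    (hnd : l.Nodup) (hlen : l.length = 9) :
    ∃ v ∈ ([1, 3] : List (ZMod 9)), ∃ T : List (ZMod 9),
      IsOrbitBalanced (0 :: v :: T) ∧ (0 :: v :: T).Nodup ∧ T.length = 7 := by
  obtain ⟨x₀, x₁, rest, rfl⟩ : ∃ x₀ x₁ rest, l = x₀ :: x₁ :: rest := by
    match l, hlen with
    | x₀ :: x₁ :: rest, _ => exact ⟨x₀, x₁, rest, rfl⟩
  have h10 : x₁ - x₀ ≠ 0 := sub_ne_zero.mpr fun h => (List.nodup_cons.mp hnd).1 (by simp [h])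
  obtain ⟨u, hu⟩ := exists_unit_mul_eq_one_or_three h10
  have hinj : Function.Injective fun x : ZMod 9 => u * (x - x₀) := fun x y h => by simpa using h
  refine ⟨u * (x₁ - x₀), by rcases hu with hu | hu <;> simp [hu],
    rest.map fun x => u * (x - x₀), ?_, ?_, by simpa using hlen⟩
  · simpa using hl.map_units_mul_sub u x₀
  · simpa using hnd.map hinj

theorem not_isOrbitBalanced_zero_cons {v : ZMod 9} (hv : v ∈ ([1, 3] : List (ZMod 9)))
    {T : List (ZMod 9)} (hnd : (0 :: v :: T).Nodup) (hlen : T.length = 7) :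
    ¬ IsOrbitBalanced (0 :: v :: T) := by
  intro hbal
  have hv8 : v ∈ ([1, 2, 3, 4, 5, 6, 7, 8] : List (ZMod 9)) := by
    simp only [List.mem_cons, List.not_mem_nil, or_false] at hv
    rcases hv with rfl | rfl <;> decide
  have hperm : (0 :: v :: T).Perm [0, 1, 2, 3, 4, 5, 6, 7, 8] :=
    hnd.perm_of_length_eq_card (by decide) (by simp [hlen]) (by simp)
  have hT : ([1, 2, 3, 4, 5, 6, 7, 8].erase v).Perm T :=
    (hperm.cons_inv.trans (List.perm_cons_erase hv8)).cons_inv.symm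
  have hsearch := List.completable_of_perm extendsBalanced [0, v] hT
    fun m hm => extendsBalanced_take hbal hnd m hm
  rw [hlen, not_completable_extendsBalanced v hv] at hsearch
  exact Bool.false_ne_true hsearch

end ZMod9

theorem no_threefold_vatican_pseudoterrace_zmod9 :
    ∀ α : AddAut (ZMod 9), addOrderOf α = 3 →
      ∀ a : Fin 9 → ZMod 9, ¬ IsAddRomanPseudoterrace 9 8 α 3 a := by
  intro α hα a ha
  obtain ⟨v, hv, T, hbal, hnd, hlen⟩ := (ZMod9.isOrbitBalanced_ofFn hα ha).exists_normalized
    (List.nodup_ofFn.mpr ha.1.injective) List.length_ofFn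
  exact ZMod9.not_isOrbitBalanced_zero_cons hv hnd hlen hbal
end
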